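/- Let Ω := {(a,b) ∈ ℝ² : −3 < a < 3, −3 < b < 3, |a − b| < 3, a + b < 3} and define h(a,b) := (−a² + 2ab − b² + 6a + 6b + 63) / ((a−b−3)(a+b−3)(a+3)(a−b+3)(b+3)) for (a,b) ∈ Ω (on Ω the denominator is nonzero and h > 0). Then h attains its minimum over Ω, the minimum value equals (59 + 11√33)/486, and it is attained precisely at the point a = b = (9√33 − 57)/16. -/
import Mathlib


open Set Pointwise

noncomputable section

/-- We work in the plane `ℝ × ℝ`. -/
abbrev V : Type := ℝ × ℝ

/-- The embedding of the lattice `ℤ × ℤ` into the plane. -/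
def toR (p : ℤ × ℤ) : V := ((p.1 : ℝ), (p.2 : ℝ))

/-- The set of lattice points of the plane. -/
def latticePoints : Set V := Set.range toR

/-- A lattice polytope: the convex hull of a nonempty finite set of lattice points. -/
def IsLatticePolytope (P : Set V) : Prop :=
  ∃ S : Finset (ℤ × ℤ), S.Nonempty ∧ P = convexHull ℝ (toR '' ↑S)

/-- A toric diagram: a two-dimensional lattice polytope such that every lattice point on its
topological boundary is an extreme point. -/
def IsToricDiagram (P : Set V) : Prop :=
  IsLatticePolytope P ∧ (interior P).Nonempty ∧
    ∀ x ∈ frontier P, x ∈ latticePoints → x ∈ P.extremePoints ℝ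

/-- A lattice segment: the convex hull of two distinct lattice points. -/
def IsLatticeSegment (L : Set V) : Prop :=
  ∃ a b : ℤ × ℤ, a ≠ b ∧ L = segment ℝ (toR a) (toR b)

/-- A lattice triangle: the convex hull of three affinely independent lattice points. -/
def IsLatticeTriangle (T : Set V) : Prop :=
  ∃ a b c : ℤ × ℤ, AffineIndependent ℝ ![toR a, toR b, toR c] ∧
    T = convexHull ℝ {toR a, toR b, toR c}

/-- `E` is an edge of `P`: a maximal (nondegenerate) line segment contained in the
topological boundary of `P`. -/
def IsEdge (P E : Set V) : Prop :=
  (∃ a b : V, a ≠ b ∧ E = segment ℝ a b) ∧ E ⊆ frontier P ∧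
    ∀ F : Set V, (∃ a b : V, F = segment ℝ a b) → F ⊆ frontier P → E ⊆ F → F = E

/-- `v` is an edge vector of `P` (the difference of the endpoints of some edge of `P`). -/
def IsEdgeVector (P : Set V) (v : V) : Prop :=
  ∃ a b : V, a ≠ b ∧ IsEdge P (segment ℝ a b) ∧ v = b - a

/-- Two plane vectors are parallel when their cross product vanishes. -/
def Par (v w : V) : Prop := v.1 * w.2 = v.2 * w.1

/-- `P` admits a lattice maximal Minkowski decomposition: `P` is a Minkowski sum of at
least two lattice polytopes, each of which is a lattice segment or a lattice triangle. -/
def HasLatticeMaximalDecomposition (P : Set V) : Prop :=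
  ∃ (m : ℕ) (Ps : Fin (m + 1) → Set V), 1 ≤ m ∧
    P = ∑ k, Ps k ∧ ∀ k, IsLatticeSegment (Ps k) ∨ IsLatticeTriangle (Ps k)

/-- A convex polytope: the convex hull of a nonempty finite set of points. -/
def IsConvexPolytope (A : Set V) : Prop :=
  ∃ S : Finset V, S.Nonempty ∧ A = convexHull ℝ (↑S : Set V)

/-- `A` is a homothet `λ • P + t` (`λ > 0`) of `P`. -/
def IsHomothet (A P : Set V) : Prop :=
  ∃ (l : ℝ) (t : V), 0 < l ∧ A = (fun x => l • x + t) '' P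

/-- A (nondegenerate) line segment. -/
def IsSegmentSet (A : Set V) : Prop := ∃ a b : V, a ≠ b ∧ A = segment ℝ a b

/-- A triangle: the convex hull of three affinely independent points. -/
def IsTriangleSet (A : Set V) : Prop :=
  ∃ a b c : V, AffineIndependent ℝ ![a, b, c] ∧ A = convexHull ℝ {a, b, c}

/-- A convex polytope is Minkowski-indecomposable if in every Minkowski decomposition
into two convex polytopes, one of the summands is a point or a homothet of the polytope. -/
def MinkowskiIndecomposable (Q : Set V) : Prop :=
  ∀ A B : Set V, IsConvexPolytope A → IsConvexPolytope B → Q = A + B →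
    (∃ x, A = {x}) ∨ IsHomothet A Q ∨ (∃ x, B = {x}) ∨ IsHomothet B Q

/-- A parallelogram: a quadrilateral whose vertices `v₁ v₂ v₃ v₄` in cyclic order satisfy
`v₁ + v₃ = v₂ + v₄`. -/
def IsParallelogram (P : Set V) : Prop :=
  ∃ w : Fin 4 → V, Function.Injective w ∧ P.extremePoints ℝ = Set.range w ∧
    w 0 + w 2 = w 1 + w 3

/-- The Gauntlett–Martelli–Sparks–Waldram toric diagram `𝒴^{p,q}`. -/
def GMSW (p q : ℤ) : Set V :=
  convexHull ℝ (toR '' ({(0, 0), (1, 0), (p, p), (p - q - 1, p - q)} : Set (ℤ × ℤ)))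

/-- Cross product of lattice vectors. -/
def crossZ (u w : ℤ × ℤ) : ℤ := u.1 * w.2 - u.2 * w.1

/-- The Reeb-cone slice for the cone over `Bl_{p₁,p₂}(ℙ²)`. -/
def Omega17 : Set (ℝ × ℝ) :=
  {x | -3 < x.1 ∧ x.1 < 3 ∧ -3 < x.2 ∧ x.2 < 3 ∧ |x.1 - x.2| < 3 ∧ x.1 + x.2 < 3}

/-- The normalized volume function for the cone over `Bl_{p₁,p₂}(ℙ²)`. -/
noncomputable def h17 (a b : ℝ) : ℝ :=
  (-a ^ 2 + 2 * a * b - b ^ 2 + 6 * a + 6 * b + 63) /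
    ((a - b - 3) * (a + b - 3) * (a + 3) * (a - b + 3) * (b + 3))

section Aux17

private lemma key17 (a b r : ℝ) (hr : r ^ 2 = 33) :
    36 * (a + b + 6) ^ 2 *
      (486 * (-a ^ 2 + 2 * a * b - b ^ 2 + 6 * a + 6 * b + 63) -
        (59 + 11 * r) * ((a - b - 3) * (a + b - 3) * (a + 3) * (a - b + 3) * (b + 3)))
    = 1944 * (a - b) ^ 2 *
        (9 * (63 + 6 * (a + b)) + (a + b + 6) ^ 2 * (54 + 6 * (a + b)) -
          (a - b) ^ 2 * (63 + 6 * (a + b))) +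
      (9 - (a - b) ^ 2) * ((a + b + 6) ^ 2 - (a - b) ^ 2) * (9 * (59 + 11 * r)) *
        ((a + b) - (9 * r - 57) / 8) ^ 2 * ((a + b) - (21 - 9 * r) / 4) := by
  linear_combination ((-129848751/64:ℝ) + (28166373/32:ℝ)*r + (-5845851/64:ℝ)*r^2 + (-58635657/64:ℝ)*b + (13286025/32:ℝ)*b*r + (-1948617/64:ℝ)*b*r^2 + (9310059/64:ℝ)*b^2 + (-1830519/32:ℝ)*b^2*r + (649539/64:ℝ)*b^2*r^2 + (6515073/64:ℝ)*b^3 + (-1476225/32:ℝ)*b^3*r + (216513/64:ℝ)*b^3*r^2 + (142155/16:ℝ)*b^4 + (-72171/16:ℝ)*b^4*r + (-58635657/64:ℝ)*a + (13286025/32:ℝ)*a*r + (-1948617/64:ℝ)*a*r^2 + (-53518077/64:ℝ)*a*b + (11986947/32:ℝ)*a*b*r + (-1948617/64:ℝ)*a*b*r^2 + (-8220933/64:ℝ)*a*b^2 + (1909251/32:ℝ)*a*b^2*r + (-216513/64:ℝ)*a*b^2*r^2 + (1603071/64:ℝ)*a*b^3 + (-347733/32:ℝ)*a*b^3*r + (72171/64:ℝ)*a*b^3*r^2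 + (47385/16:ℝ)*a*b^4 + (-24057/16:ℝ)*a*b^4*r + (9310059/64:ℝ)*a^2 + (-1830519/32:ℝ)*a^2*r + (649539/64:ℝ)*a^2*r^2 + (-8220933/64:ℝ)*a^2*b + (1909251/32:ℝ)*a^2*b*r + (-216513/64:ℝ)*a^2*b*r^2 + (-2171691/32:ℝ)*a^2*b^2 + (492075/16:ℝ)*a^2*b^2*r + (-72171/32:ℝ)*a^2*b^2*r^2 + (-47385/16:ℝ)*a^2*b^3 + (24057/16:ℝ)*a^2*b^3*r + (6515073/64:ℝ)*a^3 + (-1476225/32:ℝ)*a^3*r + (216513/64:ℝ)*a^3*r^2 + (1603071/64:ℝ)*a^3*b + (-347733/32:ℝ)*a^3*b*r + (72171/64:ℝ)*a^3*b*r^2 + (-47385/16:ℝ)*a^3*b^2 + (24057/16:ℝ)*a^3*b^2*r + (142155/16:ℝ)*a^4 + (-72171/16:ℝ)*a^4*r + (47385/16:ℝ)*a^4*b + (-24057/16:ℝ)*a^4*b*r) * hr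

private lemma r33_sq : Real.sqrt 33 ^ 2 = 33 := Real.sq_sqrt (by norm_num)

private lemma r33_gt : 5 < Real.sqrt 33 := by
  nlinarith [Real.sqrt_nonneg 33, r33_sq]

private lemma r33_lt : Real.sqrt 33 < 6 := by
  nlinarith [Real.sqrt_nonneg 33, r33_sq]

set_option maxHeartbeats 1000000 in
private lemma aux17 (a b : ℝ) (ha1 : -3 < a) (ha2 : a < 3) (hb1 : -3 < b) (hb2 : b < 3)
    (hd1 : -3 < a - b) (hd2 : a - b < 3) (hs : a + b < 3) :
    0 < (a - b - 3) * (a + b - 3) * (a + 3) * (a - b + 3) * (b + 3) ∧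
    0 < -a ^ 2 + 2 * a * b - b ^ 2 + 6 * a + 6 * b + 63 ∧
    (59 + 11 * Real.sqrt 33) / 486 ≤ h17 a b ∧
    (h17 a b = (59 + 11 * Real.sqrt 33) / 486 →
      a = (9 * Real.sqrt 33 - 57) / 16 ∧ b = (9 * Real.sqrt 33 - 57) / 16) := by
  set r := Real.sqrt 33 with hrdef
  have hr : r ^ 2 = 33 := r33_sq
  have hr5 : 5 < r := r33_gt
  have hr6 : r < 6 := r33_lt
  have p1 : (0:ℝ) < 3 - (a - b) := by linarith
  have p2 : (0:ℝ) < 3 - (a + b) := by linarith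
  have p3 : (0:ℝ) < a + 3 := by linarith
  have p4 : (0:ℝ) < a - b + 3 := by linarith
  have p5 : (0:ℝ) < b + 3 := by linarith
  have p6 : (0:ℝ) < 3 + (a - b) := by linarith
  have hD : 0 < (a - b - 3) * (a + b - 3) * (a + 3) * (a - b + 3) * (b + 3) := by
    have h1 := mul_pos (mul_pos (mul_pos (mul_pos p1 p2) p3) p4) p5
    linarith [h1]
  have hN : 0 < -a ^ 2 + 2 * a * b - b ^ 2 + 6 * a + 6 * b + 63 := by
    nlinarith [mul_pos p1 p6]
  have h9u : 0 < 9 - (a - b) ^ 2 := by nlinarith [mul_pos p1 p6]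
  have h63 : (0:ℝ) < 63 + 6 * (a + b) := by linarith
  have h54 : (0:ℝ) < 54 + 6 * (a + b) := by linarith
  have hs6 : (0:ℝ) < a + b + 6 := by linarith
  have hB : 0 < 9 * (63 + 6 * (a + b)) + (a + b + 6) ^ 2 * (54 + 6 * (a + b)) -
      (a - b) ^ 2 * (63 + 6 * (a + b)) := by
    nlinarith [mul_pos h9u h63, mul_pos (mul_pos hs6 hs6) h54]
  have hQ : 0 < (a + b + 6) ^ 2 - (a - b) ^ 2 := by nlinarith [mul_pos p3 p5]
  have h59 : (0:ℝ) < 9 * (59 + 11 * r) := by linarith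
  have hlast : 0 < (a + b) - (21 - 9 * r) / 4 := by linarith
  have hT1 : 0 ≤ 1944 * (a - b) ^ 2 *
      (9 * (63 + 6 * (a + b)) + (a + b + 6) ^ 2 * (54 + 6 * (a + b)) -
        (a - b) ^ 2 * (63 + 6 * (a + b))) :=
    mul_nonneg (by positivity) hB.le
  have hT2 : 0 ≤ (9 - (a - b) ^ 2) * ((a + b + 6) ^ 2 - (a - b) ^ 2) * (9 * (59 + 11 * r)) *
      ((a + b) - (9 * r - 57) / 8) ^ 2 * ((a + b) - (21 - 9 * r) / 4) :=
    mul_nonneg (mul_nonneg (mul_nonneg (mul_nonneg h9u.le hQ.le) h59.le)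
      (sq_nonneg _)) hlast.le
  have key := key17 a b r hr
  have hX : 0 ≤ 486 * (-a ^ 2 + 2 * a * b - b ^ 2 + 6 * a + 6 * b + 63) -
      (59 + 11 * r) * ((a - b - 3) * (a + b - 3) * (a + 3) * (a - b + 3) * (b + 3)) := by
    have h36 : (0:ℝ) < 36 * (a + b + 6) ^ 2 :=
      mul_pos (by norm_num) (pow_pos hs6 2)
    have h0 : 0 ≤ 36 * (a + b + 6) ^ 2 *
        (486 * (-a ^ 2 + 2 * a * b - b ^ 2 + 6 * a + 6 * b + 63) -
          (59 + 11 * r) * ((a - b - 3) * (a + b - 3) * (a + 3) * (a - b + 3) * (b + 3))) := by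
      rw [key]; exact add_nonneg hT1 hT2
    exact nonneg_of_mul_nonneg_right h0 h36
  have hle : (59 + 11 * r) / 486 ≤ h17 a b := by
    show (59 + 11 * r) / 486 ≤ (-a ^ 2 + 2 * a * b - b ^ 2 + 6 * a + 6 * b + 63) /
      ((a - b - 3) * (a + b - 3) * (a + 3) * (a - b + 3) * (b + 3))
    rw [div_le_div_iff₀ (by norm_num) hD]
    linarith [hX]
  refine ⟨hD, hN, hle, fun heq => ?_⟩
  have heq' : (-a ^ 2 + 2 * a * b - b ^ 2 + 6 * a + 6 * b + 63) /
      ((a - b - 3) * (a + b - 3) * (a + 3) * (a - b + 3) * (b + 3)) =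
      (59 + 11 * r) / 486 := heq
  rw [div_eq_div_iff hD.ne' (by norm_num : (486:ℝ) ≠ 0)] at heq'
  have hX0 : 486 * (-a ^ 2 + 2 * a * b - b ^ 2 + 6 * a + 6 * b + 63) -
      (59 + 11 * r) * ((a - b - 3) * (a + b - 3) * (a + 3) * (a - b + 3) * (b + 3)) = 0 := by
    linarith [heq']
  have hsum : 1944 * (a - b) ^ 2 *
        (9 * (63 + 6 * (a + b)) + (a + b + 6) ^ 2 * (54 + 6 * (a + b)) -
          (a - b) ^ 2 * (63 + 6 * (a + b))) +
      (9 - (a - b) ^ 2) * ((a + b + 6) ^ 2 - (a - b) ^ 2) * (9 * (59 + 11 * r)) *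
        ((a + b) - (9 * r - 57) / 8) ^ 2 * ((a + b) - (21 - 9 * r) / 4) = 0 := by
    linear_combination -key + (36 * (a + b + 6) ^ 2) * hX0
  have hT1z : 1944 * (a - b) ^ 2 *
      (9 * (63 + 6 * (a + b)) + (a + b + 6) ^ 2 * (54 + 6 * (a + b)) -
        (a - b) ^ 2 * (63 + 6 * (a + b))) = 0 := le_antisymm (by linarith) hT1
  have hT2z : (9 - (a - b) ^ 2) * ((a + b + 6) ^ 2 - (a - b) ^ 2) * (9 * (59 + 11 * r)) *
      ((a + b) - (9 * r - 57) / 8) ^ 2 * ((a + b) - (21 - 9 * r) / 4) = 0 :=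
    le_antisymm (by linarith) hT2
  have hab : a = b := by
    rcases mul_eq_zero.mp hT1z with h | h
    · rcases mul_eq_zero.mp h with h' | h'
      · norm_num at h'
      · have := (pow_eq_zero_iff two_ne_zero).mp h'
        linarith
    · exact absurd h hB.ne'
  have hsstar : a + b = (9 * r - 57) / 8 := by
    rcases mul_eq_zero.mp hT2z with h | h
    · rcases mul_eq_zero.mp h with h' | h'
      · rcases mul_eq_zero.mp h' with h'' | h''
        · rcases mul_eq_zero.mp h'' with h3 | h3
          · exact absurd h3 h9u.ne'
          · exact absurd h3 hQ.ne'
        · exact absurd h'' h59.ne'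
      · have := (pow_eq_zero_iff two_ne_zero).mp h'
        linarith
    · exact absurd h hlast.ne'
  constructor <;> linarith

end Aux17

set_option maxHeartbeats 1000000

/-- On `Ω` the denominator of `h` is nonzero and `h > 0`; `h` attains its
minimum over `Ω`, the minimum value is `(59 + 11√33)/486`, attained precisely at
`a = b = (9√33 − 57)/16`. -/
theorem statement17 :
    (∀ x ∈ Omega17,
      (x.1 - x.2 - 3) * (x.1 + x.2 - 3) * (x.1 + 3) * (x.1 - x.2 + 3) * (x.2 + 3) ≠ 0 ∧
        0 < h17 x.1 x.2) ∧
    ((9 * Real.sqrt 33 - 57) / 16, (9 * Real.sqrt 33 - 57) / 16) ∈ Omega17 ∧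
    (∀ x ∈ Omega17,
      h17 ((9 * Real.sqrt 33 - 57) / 16) ((9 * Real.sqrt 33 - 57) / 16) ≤ h17 x.1 x.2) ∧
    h17 ((9 * Real.sqrt 33 - 57) / 16) ((9 * Real.sqrt 33 - 57) / 16)
      = (59 + 11 * Real.sqrt 33) / 486 ∧
    (∀ x ∈ Omega17, h17 x.1 x.2 = (59 + 11 * Real.sqrt 33) / 486 →
      x = ((9 * Real.sqrt 33 - 57) / 16, (9 * Real.sqrt 33 - 57) / 16)) := by
  set r := Real.sqrt 33 with hrdef
  have hr : r ^ 2 = 33 := r33_sq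
  have hr5 : 5 < r := r33_gt
  have hr6 : r < 6 := r33_lt
  set t : ℝ := (9 * r - 57) / 16 with htdef
  have ht1 : -3 < t := by rw [htdef]; linarith
  have ht2 : t < 3 := by rw [htdef]; linarith
  have hmem : ((t : ℝ), (t : ℝ)) ∈ Omega17 := by
    refine ⟨ht1, ht2, ht1, ht2, ?_, by linarith⟩
    show |t - t| < 3
    rw [sub_self, abs_zero]; norm_num
  have getc : ∀ x : ℝ × ℝ, x ∈ Omega17 → -3 < x.1 ∧ x.1 < 3 ∧ -3 < x.2 ∧ x.2 < 3 ∧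
      -3 < x.1 - x.2 ∧ x.1 - x.2 < 3 ∧ x.1 + x.2 < 3 := by
    rintro x ⟨h1, h2, h3, h4, h5, h6⟩
    rw [abs_lt] at h5
    exact ⟨h1, h2, h3, h4, h5.1, h5.2, h6⟩
  -- the value at (t, t)
  have hauxt := aux17 t t ht1 ht2 ht1 ht2 (by norm_num) (by norm_num) (by linarith)
  have hDt := hauxt.1
  have hval : h17 t t = (59 + 11 * r) / 486 := by
    have key := key17 t t r hr
    have hs6 : (0:ℝ) < t + t + 6 := by rw [htdef]; linarith
    have h36 : (0:ℝ) < 36 * (t + t + 6) ^ 2 := mul_pos (by norm_num) (pow_pos hs6 2)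
    have h0 : 36 * (t + t + 6) ^ 2 *
        (486 * (-t ^ 2 + 2 * t * t - t ^ 2 + 6 * t + 6 * t + 63) -
          (59 + 11 * r) * ((t - t - 3) * (t + t - 3) * (t + 3) * (t - t + 3) * (t + 3))) = 0 := by
      rw [key, htdef]; ring
    have hX0 := (mul_eq_zero.mp h0).resolve_left h36.ne'
    show (-t ^ 2 + 2 * t * t - t ^ 2 + 6 * t + 6 * t + 63) /
        ((t - t - 3) * (t + t - 3) * (t + 3) * (t - t + 3) * (t + 3)) = (59 + 11 * r) / 486
    rw [div_eq_div_iff hDt.ne' (by norm_num : (486:ℝ) ≠ 0)]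
    linarith [hX0]
  refine ⟨?_, hmem, ?_, hval, ?_⟩
  · intro x hx
    obtain ⟨h1, h2, h3, h4, h5, h6, h7⟩ := getc x hx
    obtain ⟨hD, hN, -, -⟩ := aux17 x.1 x.2 h1 h2 h3 h4 h5 h6 h7
    exact ⟨hD.ne', div_pos hN hD⟩
  · intro x hx
    obtain ⟨h1, h2, h3, h4, h5, h6, h7⟩ := getc x hx
    obtain ⟨-, -, hle, -⟩ := aux17 x.1 x.2 h1 h2 h3 h4 h5 h6 h7
    rw [hval]; exact hle
  · intro x hx heq
    obtain ⟨h1, h2, h3, h4, h5, h6, h7⟩ := getc x hx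
    obtain ⟨-, -, -, hchar⟩ := aux17 x.1 x.2 h1 h2 h3 h4 h5 h6 h7
    obtain ⟨ha, hb⟩ := hchar heq
    exact Prod.ext ha hb
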